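/- arXiv:1002.0651 — 9 statements merged into one kernel-verified Lean document; each statement's English description precedes it below -/
import Mathlib

section
/- Suppose initially all doors are equally likely to hide the car (P(Car = i) = 1/3 for every door i) and Car is independent of P1. Then for all doors i and j with P({P1 = i} ∩ {Goat = j}) > 0, the conditional probability that switching gives the car satisfies P({Switch = Car} | {P1 = i} ∩ {Goat = j}) ≥ 1/2. -/
open MeasureTheory
open scoped ENNReal

/-- For two distinct doors `a b : Fin 3`, `switchDoor a b = -(a + b)` is the unique
door distinct from both `a` and `b` (since `0 + 1 + 2 = 0` in `Fin 3`). -/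
def switchDoor (a b : Fin 3) : Fin 3 := -(a + b)

lemma fin3_mem : ∀ a b : Fin 3, a ≠ b → ∀ c : Fin 3,
    c = a ∨ c = b ∨ c = switchDoor a b := by decide

lemma switch_ne_left : ∀ a b : Fin 3, a ≠ b → switchDoor a b ≠ a := by decide

lemma switch_ne_right : ∀ a b : Fin 3, a ≠ b → switchDoor a b ≠ b := by decide

/-- If all doors are equally likely to hide the car and the car's location is
independent of the player's initial choice, then given any initially chosen door `i`
and opened door `j` of positive probability, the conditional probability that
switching gives the car is at least `1/2`. -/
theorem monty_hall_conditional_at_least_half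
    {Ω : Type*} [MeasurableSpace Ω] (P : Measure Ω) [IsProbabilityMeasure P]
    (Car P1 Goat : Ω → Fin 3)
    (hmCar : Measurable Car) (hmP1 : Measurable P1) (hmGoat : Measurable Goat)
    (hGoatCar : ∀ ω, Goat ω ≠ Car ω) (hGoatP1 : ∀ ω, Goat ω ≠ P1 ω)
    (hUnif : ∀ i : Fin 3, P {ω | Car ω = i} = 1 / 3)
    (hIndep : ProbabilityTheory.IndepFun Car P1 P) :
    ∀ i j : Fin 3, 0 < P ({ω | P1 ω = i} ∩ {ω | Goat ω = j}) →
      1 / 2 ≤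
        P ({ω | switchDoor (P1 ω) (Goat ω) = Car ω} ∩ ({ω | P1 ω = i} ∩ {ω | Goat ω = j})) /
          P ({ω | P1 ω = i} ∩ {ω | Goat ω = j}) := by
  intro i j hpos
  have hij : i ≠ j := by
    rintro rfl
    have hEmpty : ({ω | P1 ω = i} ∩ {ω | Goat ω = i}) = (∅ : Set Ω) := by
      ext ω
      simp only [Set.mem_inter_iff, Set.mem_setOf_eq, Set.mem_empty_iff_false, iff_false,
        not_and]
      intro h1 h2
      exact hGoatP1 ω (h2.trans h1.symm)
    rw [hEmpty, measure_empty] at hpos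
    exact lt_irrefl 0 hpos
  set k := switchDoor i j with hk
  have hki : k ≠ i := switch_ne_left i j hij
  have hkj : k ≠ j := switch_ne_right i j hij
  set E : Set Ω := {ω | P1 ω = i} ∩ {ω | Goat ω = j} with hE
  -- measurability
  have hmeas : ∀ (f : Ω → Fin 3), Measurable f → ∀ c : Fin 3,
      MeasurableSet {ω | f ω = c} := fun f hf c => hf (measurableSet_singleton c)
  have hmE : MeasurableSet E := (hmeas P1 hmP1 i).inter (hmeas Goat hmGoat j)
  -- numerator set rewrite
  have hnum : {ω | switchDoor (P1 ω) (Goat ω) = Car ω} ∩ E = {ω | Car ω = k} ∩ E := by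
    ext ω
    simp only [Set.mem_inter_iff, Set.mem_setOf_eq, hE]
    constructor
    · rintro ⟨hs, h1, h2⟩
      rw [h1, h2] at hs
      exact ⟨hs.symm, h1, h2⟩
    · rintro ⟨hc, h1, h2⟩
      refine ⟨?_, h1, h2⟩
      rw [h1, h2, hc]
  -- {Car = k} ∩ E = {Car = k} ∩ {P1 = i}
  have hCk : {ω | Car ω = k} ∩ E = {ω | Car ω = k} ∩ {ω | P1 ω = i} := by
    ext ω
    simp only [Set.mem_inter_iff, Set.mem_setOf_eq, hE]
    constructor
    · rintro ⟨hc, h1, _⟩; exact ⟨hc, h1⟩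
    · rintro ⟨hc, h1⟩
      refine ⟨hc, h1, ?_⟩
      rcases fin3_mem i j hij (Goat ω) with h | h | h
      · exact absurd (h.trans h1.symm) (hGoatP1 ω)
      · exact h
      · exact absurd (h.trans hc.symm) (hGoatCar ω)
  -- split E by car position
  have hsplit : E = ({ω | Car ω = i} ∩ E) ∪ ({ω | Car ω = k} ∩ E) := by
    ext ω
    simp only [Set.mem_union, Set.mem_inter_iff, Set.mem_setOf_eq, hE]
    constructor
    · rintro ⟨h1, h2⟩
      rcases fin3_mem i j hij (Car ω) with h | h | h
      · exact Or.inl ⟨h, h1, h2⟩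
      · exact absurd (h2.trans h.symm) (hGoatCar ω)
      · exact Or.inr ⟨h, h1, h2⟩
    · rintro (⟨_, h⟩ | ⟨_, h⟩) <;> exact h
  -- independence computation
  have hind : ∀ c : Fin 3, P ({ω | Car ω = c} ∩ {ω | P1 ω = i})
      = (1 / 3) * P {ω | P1 ω = i} := by
    intro c
    have := hIndep.measure_inter_preimage_eq_mul {c} {i}
      (measurableSet_singleton c) (measurableSet_singleton i)
    have hpre : Car ⁻¹' {c} = {ω | Car ω = c} := rfl
    have hpre' : P1 ⁻¹' {i} = {ω | P1 ω = i} := rfl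
    rw [hpre, hpre'] at this
    rw [this, hUnif c]
  -- quantities
  set N := P ({ω | Car ω = k} ∩ E) with hN
  have hNeq : N = (1 / 3) * P {ω | P1 ω = i} := by rw [hN, hCk, hind k]
  have hA_le : P ({ω | Car ω = i} ∩ E) ≤ N := by
    calc P ({ω | Car ω = i} ∩ E) ≤ P ({ω | Car ω = i} ∩ {ω | P1 ω = i}) := by
          apply measure_mono
          exact Set.inter_subset_inter_right _ Set.inter_subset_left
      _ = (1 / 3) * P {ω | P1 ω = i} := hind i
      _ = N := hNeq.symm
  have hEle : P E ≤ N + N := by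
    calc P E ≤ P ({ω | Car ω = i} ∩ E) + P ({ω | Car ω = k} ∩ E) := by
          conv_lhs => rw [hsplit]
          exact measure_union_le _ _
      _ ≤ N + N := add_le_add hA_le le_rfl
  rw [hnum]
  rw [ENNReal.le_div_iff_mul_le (Or.inl hpos.ne') (Or.inl (measure_ne_top P E))]
  calc (1 / 2 : ℝ≥0∞) * P E ≤ (1 / 2) * (N + N) :=
        mul_le_mul_right hEle _
    _ = N := by
        rw [← two_mul, ← mul_assoc, one_div,
          ENNReal.inv_mul_cancel two_ne_zero ENNReal.ofNat_ne_top, one_mul]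
end

section
/- Suppose initially all doors are equally likely to hide the car (P(Car = i) = 1/3 for every door i) and Car is independent of P1. Then no strategy beats always switching: for every decision function f : Fin 3 → Fin 3 → Fin 3 (giving the player's final door as a function of the initially chosen door and the door opened by the host), P({ω : f (P1 ω) (Goat ω) = Car ω}) ≤ 2/3. -/
open MeasureTheory
open scoped ENNReal

/-- If all doors are equally likely to hide the car and the car's location is
independent of the player's initial choice, then no strategy beats always switching:
every decision function `f` (giving the final door as a function of the initially
chosen door and the opened door) wins the car with probability at most `2/3`. -/
theorem monty_hall_no_strategy_beats_switching
    {Ω : Type*} [MeasurableSpace Ω] (P : Measure Ω) [IsProbabilityMeasure P]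
    (Car P1 Goat : Ω → Fin 3)
    (hmCar : Measurable Car) (hmP1 : Measurable P1) (hmGoat : Measurable Goat)
    (hGoatCar : ∀ ω, Goat ω ≠ Car ω) (hGoatP1 : ∀ ω, Goat ω ≠ P1 ω)
    (hUnif : ∀ i : Fin 3, P {ω | Car ω = i} = 1 / 3)
    (hIndep : ProbabilityTheory.IndepFun Car P1 P) :
    ∀ f : Fin 3 → Fin 3 → Fin 3,
      P {ω | f (P1 ω) (Goat ω) = Car ω} ≤ 2 / 3 := by
  intro f
  have htwo : ∀ a b : Fin 3, a ≠ b → a = b + 1 ∨ a = b + 2 := by decide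
  have subset : {ω | f (P1 ω) (Goat ω) = Car ω} ⊆
      ⋃ j : Fin 3, (Car ⁻¹' {f j (j + 1), f j (j + 2)} ∩ P1 ⁻¹' {j}) := by
    intro ω hω
    refine Set.mem_iUnion.2 ⟨P1 ω, ?_, rfl⟩
    rcases htwo (Goat ω) (P1 ω) (hGoatP1 ω) with h2 | h2
    · left; rw [← hω, h2]
    · right; rw [← hω, h2]; exact Set.mem_singleton _
  have hCar2 : ∀ a b : Fin 3, P (Car ⁻¹' {a, b}) ≤ 2 / 3 := by
    intro a b
    have : Car ⁻¹' {a, b} ⊆ Car ⁻¹' {a} ∪ Car ⁻¹' {b} := by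
      intro ω hω
      rcases hω with h | h
      · exact Or.inl h
      · exact Or.inr h
    calc P (Car ⁻¹' {a, b}) ≤ P (Car ⁻¹' {a}) + P (Car ⁻¹' {b}) :=
          (measure_mono this).trans (measure_union_le _ _)
      _ = 1 / 3 + 1 / 3 := by rw [show Car ⁻¹' {a} = {ω | Car ω = a} from rfl,
          show Car ⁻¹' {b} = {ω | Car ω = b} from rfl, hUnif a, hUnif b]
      _ = 2 / 3 := by
          rw [ENNReal.div_add_div_same]
          norm_num
  have hterm : ∀ j : Fin 3,
      P (Car ⁻¹' {f j (j + 1), f j (j + 2)} ∩ P1 ⁻¹' {j}) ≤ 2 / 3 * P (P1 ⁻¹' {j}) := by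
    intro j
    rw [hIndep.measure_inter_preimage_eq_mul _ _ (by measurability) (by measurability)]
    exact mul_le_mul_left (hCar2 _ _) _
  have hsum : ∑ j : Fin 3, P (P1 ⁻¹' {j}) = 1 := by
    rw [sum_measure_preimage_singleton _ (fun j _ => hmP1 (measurableSet_singleton j))]
    simp [Set.preimage_univ]
  calc P {ω | f (P1 ω) (Goat ω) = Car ω}
      ≤ ∑ j : Fin 3, P (Car ⁻¹' {f j (j + 1), f j (j + 2)} ∩ P1 ⁻¹' {j}) :=
        (measure_mono subset).trans (measure_iUnion_fintype_le _ _)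
    _ ≤ ∑ j : Fin 3, 2 / 3 * P (P1 ⁻¹' {j}) := Finset.sum_le_sum fun j _ => hterm j
    _ = 2 / 3 := by rw [← Finset.mul_sum, hsum, mul_one]
end

section
/- Suppose initially all doors are equally likely to hide the car (P(Car = i) = 1/3 for every door i) and Car is independent of P1. Then always switching gives the player the car with unconditional probability 2/3: P({ω : Switch ω = Car ω}) = 2/3. -/
open MeasureTheory
open scoped ENNReal

lemma switchDoor_eq_iff (a b c : Fin 3) (h1 : b ≠ c) (h2 : b ≠ a) :
    switchDoor a b = c ↔ c ≠ a := by
  revert h1 h2; unfold switchDoor; revert a b c; decide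

/-- If all doors are equally likely to hide the car and the car's location is
independent of the player's initial choice, then always switching gives the player
the car with unconditional probability `2/3`. -/
theorem monty_hall_switching_wins_two_thirds
    {Ω : Type*} [MeasurableSpace Ω] (P : Measure Ω) [IsProbabilityMeasure P]
    (Car P1 Goat : Ω → Fin 3)
    (hmCar : Measurable Car) (hmP1 : Measurable P1) (hmGoat : Measurable Goat)
    (hGoatCar : ∀ ω, Goat ω ≠ Car ω) (hGoatP1 : ∀ ω, Goat ω ≠ P1 ω)
    (hUnif : ∀ i : Fin 3, P {ω | Car ω = i} = 1 / 3)
    (hIndep : ProbabilityTheory.IndepFun Car P1 P) :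
    P {ω | switchDoor (P1 ω) (Goat ω) = Car ω} = 2 / 3 := by
  have hset : {ω | switchDoor (P1 ω) (Goat ω) = Car ω} = {ω | Car ω = P1 ω}ᶜ := by
    ext ω
    simp only [Set.mem_setOf_eq, Set.mem_compl_iff]
    rw [switchDoor_eq_iff _ _ _ (hGoatCar ω) (hGoatP1 ω)]
  have hmeas : MeasurableSet {ω | Car ω = P1 ω} :=
    measurableSet_eq_fun hmCar hmP1
  have heq : {ω | Car ω = P1 ω} = ⋃ i : Fin 3, (Car ⁻¹' {i} ∩ P1 ⁻¹' {i}) := by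
    ext ω
    simp only [Set.mem_setOf_eq, Set.mem_iUnion, Set.mem_inter_iff, Set.mem_preimage,
      Set.mem_singleton_iff]
    exact ⟨fun h => ⟨P1 ω, h, rfl⟩, fun ⟨i, h1, h2⟩ => h1.trans h2.symm⟩
  have hdisj : Pairwise (Function.onFun Disjoint
      fun i : Fin 3 => Car ⁻¹' {i} ∩ P1 ⁻¹' {i}) := by
    intro i j hij
    refine Set.disjoint_left.mpr fun ω hωi hωj => hij ?_
    exact hωi.1.symm.trans hωj.1
  have hCarP1 : P {ω | Car ω = P1 ω} = 1 / 3 := by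
    rw [heq, measure_iUnion hdisj (fun i => (hmCar (measurableSet_singleton i)).inter
      (hmP1 (measurableSet_singleton i)))]
    have hind : ∀ i : Fin 3, P (Car ⁻¹' {i} ∩ P1 ⁻¹' {i})
        = (1 / 3) * P (P1 ⁻¹' {i}) := by
      intro i
      rw [hIndep.measure_inter_preimage_eq_mul _ _ (measurableSet_singleton i)
        (measurableSet_singleton i)]
      congr 1
      exact hUnif i
    rw [tsum_fintype]
    simp only [hind]
    rw [← Finset.mul_sum]
    have hsum : ∑ i : Fin 3, P (P1 ⁻¹' {i}) = 1 := by
      have := measure_iUnion (μ := P) (fun i j hij => Set.disjoint_left.mpr fun ω h1 h2 =>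
        hij (h1.symm.trans h2)) (fun i : Fin 3 => hmP1 (measurableSet_singleton i))
      rw [tsum_fintype] at this
      rw [← this]
      have : (⋃ i : Fin 3, P1 ⁻¹' {i}) = Set.univ := by
        ext ω; simp
      rw [this, measure_univ]
    rw [hsum, mul_one]
  rw [hset, measure_compl hmeas (measure_ne_top P _), hCarP1, measure_univ]
  rw [show (1 : ℝ≥0∞) / 3 = 3⁻¹ by norm_num, show (2 : ℝ≥0∞) / 3 = 2 * 3⁻¹ by
    rw [div_eq_mul_inv]]
  rw [ENNReal.sub_eq_of_eq_add (by norm_num)]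
  ring_nf
  rw [← ENNReal.mul_inv_cancel (by norm_num) (by norm_num) (a := (3:ℝ≥0∞))]
  ring
end

section
/- Bayes posterior-odds computation: suppose initially all doors are equally likely to hide the car (P(Car = i) = 1/3 for every door i) and Car is independent of P1. Fix pairwise distinct doors i, j, k, assume P(P1 = i) > 0, and let q := P({Goat = j} | {Car = i} ∩ {P1 = i}) be the probability that the host opens door j when the player chose door i and the car is behind door i. Then P({P1 = i} ∩ {Goat = j}) > 0, and the posterior probabilities satisfy P({Car = k} | {P1 = i} ∩ {Goat = j}) = 1/(1+q) and P({Car = i} | {P1 = i} ∩ {Goat = j}) = q/(1+q); in particular the posterior odds of the switch door versus the initially chosen door are 1 : q. -/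
open MeasureTheory
open scoped ENNReal

/-- Bayes posterior-odds computation for the Monty Hall problem: if all doors are
equally likely to hide the car, the car's location is independent of the player's
initial choice, the player chose door `i` (with positive probability) and the host
opened door `j`, and `q` is the conditional probability that the host opens door `j`
given that the car is behind the chosen door `i`, then the event
`{P1 = i} ∩ {Goat = j}` has positive probability and the posterior probabilities of
the car being behind the switch door `k` resp. the chosen door `i` are `1/(1+q)` and
`q/(1+q)`: posterior odds `1 : q`. -/
theorem monty_hall_posterior_odds
    {Ω : Type*} [MeasurableSpace Ω] (P : Measure Ω) [IsProbabilityMeasure P]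
    (Car P1 Goat : Ω → Fin 3)
    (hmCar : Measurable Car) (hmP1 : Measurable P1) (hmGoat : Measurable Goat)
    (hGoatCar : ∀ ω, Goat ω ≠ Car ω) (hGoatP1 : ∀ ω, Goat ω ≠ P1 ω)
    (hUnif : ∀ i : Fin 3, P {ω | Car ω = i} = 1 / 3)
    (hIndep : ProbabilityTheory.IndepFun Car P1 P)
    (i j k : Fin 3) (hij : i ≠ j) (hik : i ≠ k) (hjk : j ≠ k)
    (hP1i : 0 < P {ω | P1 ω = i})
    (q : ℝ≥0∞)
    (hq : q = P ({ω | Goat ω = j} ∩ ({ω | Car ω = i} ∩ {ω | P1 ω = i})) /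
        P ({ω | Car ω = i} ∩ {ω | P1 ω = i})) :
    0 < P ({ω | P1 ω = i} ∩ {ω | Goat ω = j}) ∧
      P ({ω | Car ω = k} ∩ ({ω | P1 ω = i} ∩ {ω | Goat ω = j})) /
          P ({ω | P1 ω = i} ∩ {ω | Goat ω = j}) = 1 / (1 + q) ∧
      P ({ω | Car ω = i} ∩ ({ω | P1 ω = i} ∩ {ω | Goat ω = j})) /
          P ({ω | P1 ω = i} ∩ {ω | Goat ω = j}) = q / (1 + q) := by
  have fin3₁ : ∀ a b c x : Fin 3, a ≠ b → a ≠ c → b ≠ c → x ≠ b → x = a ∨ x = c := by decide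
  have fin3₂ : ∀ a b c x : Fin 3, (a ≠ b ∧ a ≠ c ∧ b ≠ c ∧ x ≠ c ∧ x ≠ a) → x = b := by decide
  have mCar : ∀ d : Fin 3, MeasurableSet {ω | Car ω = d} :=
    fun d => hmCar (MeasurableSet.singleton d)
  have mP1 : ∀ d : Fin 3, MeasurableSet {ω | P1 ω = d} :=
    fun d => hmP1 (MeasurableSet.singleton d)
  have mGoat : ∀ d : Fin 3, MeasurableSet {ω | Goat ω = d} :=
    fun d => hmGoat (MeasurableSet.singleton d)
  have hindep : ∀ a b : Fin 3,
      P ({ω | Car ω = a} ∩ {ω | P1 ω = b}) = P {ω | Car ω = a} * P {ω | P1 ω = b} :=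
    fun a b => hIndep.measure_inter_preimage_eq_mul _ _
      (MeasurableSet.singleton a) (MeasurableSet.singleton b)
  set B := P {ω | P1 ω = i} with hBdef
  have hBne : B ≠ 0 := hP1i.ne'
  have hBtop : B ≠ ⊤ := (measure_ne_top P _)
  set a : ℝ≥0∞ := 1/3 * B with hadef
  have hane : a ≠ 0 := by
    simp only [hadef, mul_ne_zero_iff]
    exact ⟨by norm_num, hBne⟩
  have hatop : a ≠ ⊤ := by
    simp only [hadef]
    exact ENNReal.mul_ne_top (by norm_num) hBtop
  have hci : P ({ω | Car ω = i} ∩ {ω | P1 ω = i}) = a := by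
    rw [hindep i i, hUnif i]
  have hck : P ({ω | Car ω = k} ∩ {ω | P1 ω = i}) = a := by
    rw [hindep k i, hUnif k]
  -- n = q * a
  have hn : P ({ω | Goat ω = j} ∩ ({ω | Car ω = i} ∩ {ω | P1 ω = i})) = q * a := by
    rw [hq, hci, ENNReal.div_mul_cancel hane hatop]
  -- set equalities
  have hAi : {ω | Car ω = i} ∩ ({ω | P1 ω = i} ∩ {ω | Goat ω = j})
      = {ω | Goat ω = j} ∩ ({ω | Car ω = i} ∩ {ω | P1 ω = i}) := by
    ext ω; simp only [Set.mem_inter_iff, Set.mem_setOf_eq]; tauto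
  have hAk : {ω | Car ω = k} ∩ ({ω | P1 ω = i} ∩ {ω | Goat ω = j})
      = {ω | Car ω = k} ∩ {ω | P1 ω = i} := by
    ext ω
    simp only [Set.mem_inter_iff, Set.mem_setOf_eq]
    constructor
    · rintro ⟨hc, hp, _⟩; exact ⟨hc, hp⟩
    · rintro ⟨hc, hp⟩
      refine ⟨hc, hp, fin3₂ i j k (Goat ω) ⟨hij, hik, hjk, ?_, ?_⟩⟩
      · exact fun h => hGoatCar ω (h.trans hc.symm)
      · exact fun h => hGoatP1 ω (h.trans hp.symm)
  have hsplit : {ω | P1 ω = i} ∩ {ω | Goat ω = j}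
      = ({ω | Car ω = i} ∩ ({ω | P1 ω = i} ∩ {ω | Goat ω = j}))
        ∪ ({ω | Car ω = k} ∩ ({ω | P1 ω = i} ∩ {ω | Goat ω = j})) := by
    ext ω
    simp only [Set.mem_inter_iff, Set.mem_union, Set.mem_setOf_eq]
    constructor
    · rintro ⟨h1, h2⟩
      rcases fin3₁ i j k (Car ω) hij hik hjk (fun h => hGoatCar ω (h2.trans h.symm)) with h | h
      · exact Or.inl ⟨h, h1, h2⟩
      · exact Or.inr ⟨h, h1, h2⟩
    · rintro (⟨_, h⟩ | ⟨_, h⟩) <;> exact h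
  have hdisj : Disjoint ({ω | Car ω = i} ∩ ({ω | P1 ω = i} ∩ {ω | Goat ω = j}))
      ({ω | Car ω = k} ∩ ({ω | P1 ω = i} ∩ {ω | Goat ω = j})) := by
    rw [Set.disjoint_left]
    rintro ω ⟨h1, -⟩ ⟨h2, -⟩
    exact hik (h1.symm.trans h2)
  have hPAi : P ({ω | Car ω = i} ∩ ({ω | P1 ω = i} ∩ {ω | Goat ω = j})) = q * a := by
    rw [hAi, hn]
  have hPAk : P ({ω | Car ω = k} ∩ ({ω | P1 ω = i} ∩ {ω | Goat ω = j})) = a := by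
    rw [hAk, hck]
  have hD : P ({ω | P1 ω = i} ∩ {ω | Goat ω = j}) = a * (1 + q) := by
    rw [hsplit, measure_union hdisj (((mCar k).inter ((mP1 i).inter (mGoat j)))),
      hPAi, hPAk]
    ring
  have h1q : (1 : ℝ≥0∞) + q ≠ 0 := (lt_of_lt_of_le zero_lt_one le_self_add).ne'
  refine ⟨?_, ?_, ?_⟩
  · rw [hD]
    exact ENNReal.mul_pos hane h1q
  · rw [hPAk, hD]
    calc a / (a * (1 + q)) = a * 1 / (a * (1 + q)) := by rw [mul_one]
    _ = 1 / (1 + q) := ENNReal.mul_div_mul_left _ _ hane hatop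
  · rw [hPAi, hD]
    calc q * a / (a * (1 + q)) = a * q / (a * (1 + q)) := by rw [mul_comm q a]
    _ = q / (1 + q) := ENNReal.mul_div_mul_left _ _ hane hatop
end

section
/- Suppose initially all doors are equally likely to hide the car (P(Car = i) = 1/3 for every door i), Car is independent of P1, and the host is unbiased: for every door i with P({Car = i} ∩ {P1 = i}) > 0 and every door j ≠ i, P({Goat = j} | {Car = i} ∩ {P1 = i}) = 1/2. Then for all doors i ≠ j with P({P1 = i} ∩ {Goat = j}) > 0, the conditional probability that switching gives the car is exactly 2/3: P({Switch = Car} | {P1 = i} ∩ {Goat = j}) = 2/3. -/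
/-!
Given `P1 = i`, independence and uniformity put the car behind `i` and behind
`k = switchDoor i j` with the same probability `a = P(P1 = i) / 3`. If the car is behind `k`
the host is forced to open `j`; if it is behind `i` he opens `j` only half the time. Hence
`P(P1 = i, Goat = j) = a + a / 2`, of which switching wins `a`, i.e. `2 / 3`.
-/

open MeasureTheory
open scoped ENNReal

theorem switchDoor_ne_left {i j : Fin 3} (h : i ≠ j) : switchDoor i j ≠ i := by
  revert i j; decide

theorem eq_of_ne_of_ne_switchDoor {i j c : Fin 3} (h : i ≠ j) (hi : c ≠ i)
    (hk : c ≠ switchDoor i j) : c = j := by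
  revert i j c; decide

theorem eq_of_ne_switchDoor_of_ne {i j c : Fin 3} (h : i ≠ j) (hj : c ≠ j)
    (hk : c ≠ switchDoor i j) : c = i := by
  revert i j c; decide

theorem ENNReal.div_self_add_half_mul_self {a : ℝ≥0∞} (h0 : a ≠ 0) (htop : a ≠ ⊤) :
    a / (a + 1 / 2 * a) = 2 / 3 := by
  have hden : a + 1 / 2 * a ≠ ⊤ := by finiteness
  rw [ENNReal.div_eq_div_iff (by norm_num) (by norm_num) (by simp [h0]) hden, add_mul,
    mul_comm (1 / 2), mul_assoc, ENNReal.div_mul_cancel two_ne_zero ENNReal.ofNat_ne_top]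
  ring

section Doors

variable {Ω : Type*} {Car P1 Goat : Ω → Fin 3} {i j : Fin 3}

theorem setOf_switchDoor_inter_eq :
    {ω | switchDoor (P1 ω) (Goat ω) = Car ω} ∩ ({ω | P1 ω = i} ∩ {ω | Goat ω = j}) =
      ({ω | P1 ω = i} ∩ {ω | Goat ω = j}) ∩ {ω | Car ω = switchDoor i j} := by
  ext ω
  simp only [Set.mem_inter_iff, Set.mem_ofPred_eq]
  constructor
  · rintro ⟨hwin, hi, hj⟩
    exact ⟨⟨hi, hj⟩, by rw [← hwin, hi, hj]⟩
  · rintro ⟨⟨hi, hj⟩, hk⟩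
    exact ⟨by rw [hi, hj, hk], hi, hj⟩

theorem inter_setOf_car_eq_switchDoor (hij : i ≠ j) (hGoatCar : ∀ ω, Goat ω ≠ Car ω)
    (hGoatP1 : ∀ ω, Goat ω ≠ P1 ω) :
    ({ω | P1 ω = i} ∩ {ω | Goat ω = j}) ∩ {ω | Car ω = switchDoor i j} =
      {ω | Car ω = switchDoor i j} ∩ {ω | P1 ω = i} := by
  ext ω
  simp only [Set.mem_inter_iff, Set.mem_ofPred_eq]
  constructor
  · rintro ⟨⟨hi, -⟩, hk⟩
    exact ⟨hk, hi⟩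
  · rintro ⟨hk, hi⟩
    exact ⟨⟨hi, eq_of_ne_of_ne_switchDoor hij (hi ▸ hGoatP1 ω) (hk ▸ hGoatCar ω)⟩, hk⟩

theorem inter_sdiff_setOf_car_eq_switchDoor (hij : i ≠ j)
    (hGoatCar : ∀ ω, Goat ω ≠ Car ω) :
    ({ω | P1 ω = i} ∩ {ω | Goat ω = j}) \ {ω | Car ω = switchDoor i j} =
      {ω | Goat ω = j} ∩ ({ω | Car ω = i} ∩ {ω | P1 ω = i}) := by
  ext ω
  simp only [Set.mem_sdiff, Set.mem_inter_iff, Set.mem_ofPred_eq]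
  constructor
  · rintro ⟨⟨hi, hj⟩, hk⟩
    exact ⟨hj, eq_of_ne_switchDoor_of_ne hij (hj ▸ (hGoatCar ω).symm) hk, hi⟩
  · rintro ⟨hj, hc, hi⟩
    exact ⟨⟨hi, hj⟩, fun hk => switchDoor_ne_left hij (hk ▸ hc)⟩

end Doors

theorem monty_hall_conditional_two_thirds_general
    {Ω : Type*} [MeasurableSpace Ω] (P : Measure Ω) [IsProbabilityMeasure P]
    (Car P1 Goat : Ω → Fin 3)
    (hmCar : Measurable Car)
    (hGoatCar : ∀ ω, Goat ω ≠ Car ω) (hGoatP1 : ∀ ω, Goat ω ≠ P1 ω)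
    (hUnif : ∀ i : Fin 3, P {ω | Car ω = i} = 1 / 3)
    (hIndep : ProbabilityTheory.IndepFun Car P1 P)
    (hHost : ∀ i : Fin 3, 0 < P ({ω | Car ω = i} ∩ {ω | P1 ω = i}) →
      ∀ j : Fin 3, j ≠ i →
        P ({ω | Goat ω = j} ∩ ({ω | Car ω = i} ∩ {ω | P1 ω = i})) /
            P ({ω | Car ω = i} ∩ {ω | P1 ω = i}) = 1 / 2) :
    ∀ i j : Fin 3, i ≠ j → 0 < P ({ω | P1 ω = i} ∩ {ω | Goat ω = j}) →
      P ({ω | switchDoor (P1 ω) (Goat ω) = Car ω} ∩ ({ω | P1 ω = i} ∩ {ω | Goat ω = j})) /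
          P ({ω | P1 ω = i} ∩ {ω | Goat ω = j}) = 2 / 3 := by
  intro i j hij hij_pos
  set a := 1 / 3 * P {ω | P1 ω = i}
  have hCarP1 (c : Fin 3) : P ({ω | Car ω = c} ∩ {ω | P1 ω = i}) = a :=
    (hIndep.measure_inter_preimage_eq_mul _ _ (measurableSet_singleton c)
      (measurableSet_singleton i)).trans (congrArg (· * _) (hUnif c))
  have ha0 : a ≠ 0 :=
    mul_ne_zero (by simp)
      fun hp => hij_pos.ne' (measure_mono_null Set.inter_subset_left hp)
  have haTop : a ≠ ⊤ := hCarP1 i ▸ measure_ne_top P _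
  have hlose : P ({ω | Goat ω = j} ∩ ({ω | Car ω = i} ∩ {ω | P1 ω = i})) = 1 / 2 * a := by
    have hpos : 0 < P ({ω | Car ω = i} ∩ {ω | P1 ω = i}) :=
      (hCarP1 i).symm ▸ pos_iff_ne_zero.2 ha0
    rw [← hCarP1 i, ← hHost i hpos j hij.symm,
      ENNReal.div_mul_cancel hpos.ne' (measure_ne_top P _)]
  have hsplit : P ({ω | P1 ω = i} ∩ {ω | Goat ω = j}) = a + 1 / 2 * a := by
    have hk : MeasurableSet {ω | Car ω = switchDoor i j} := hmCar (measurableSet_singleton _)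
    rw [← measure_inter_add_sdiff _ hk, inter_setOf_car_eq_switchDoor hij hGoatCar hGoatP1,
      inter_sdiff_setOf_car_eq_switchDoor hij hGoatCar, hCarP1, hlose]
  rw [setOf_switchDoor_inter_eq, inter_setOf_car_eq_switchDoor hij hGoatCar hGoatP1, hCarP1,
    hsplit]
  exact ENNReal.div_self_add_half_mul_self ha0 haTop

/-- If all doors are equally likely to hide the car, the car's location is
independent of the player's initial choice, and the host is unbiased (opens either
available door with conditional probability `1/2` when the player's initial choice
hides the car), then given any initially chosen door `i` and opened door `j ≠ i` of
positive probability, the conditional probability that switching gives the car is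
exactly `2/3`. -/
theorem monty_hall_conditional_two_thirds
    {Ω : Type*} [MeasurableSpace Ω] (P : Measure Ω) [IsProbabilityMeasure P]
    (Car P1 Goat : Ω → Fin 3)
    (hmCar : Measurable Car) (hmP1 : Measurable P1) (hmGoat : Measurable Goat)
    (hGoatCar : ∀ ω, Goat ω ≠ Car ω) (hGoatP1 : ∀ ω, Goat ω ≠ P1 ω)
    (hUnif : ∀ i : Fin 3, P {ω | Car ω = i} = 1 / 3)
    (hIndep : ProbabilityTheory.IndepFun Car P1 P)
    (hHost : ∀ i : Fin 3, 0 < P ({ω | Car ω = i} ∩ {ω | P1 ω = i}) →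
      ∀ j : Fin 3, j ≠ i →
        P ({ω | Goat ω = j} ∩ ({ω | Car ω = i} ∩ {ω | P1 ω = i})) /
            P ({ω | Car ω = i} ∩ {ω | P1 ω = i}) = 1 / 2) :
    ∀ i j : Fin 3, i ≠ j → 0 < P ({ω | P1 ω = i} ∩ {ω | Goat ω = j}) →
      P ({ω | switchDoor (P1 ω) (Goat ω) = Car ω} ∩ ({ω | P1 ω = i} ∩ {ω | Goat ω = j})) /
          P ({ω | P1 ω = i} ∩ {ω | Goat ω = j}) = 2 / 3 :=
  monty_hall_conditional_two_thirds_general P Car P1 Goat hmCar hGoatCar hGoatP1 hUnif hIndep hHost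
end

section
/- Symmetry reduces the conditional problem to the unconditional one: suppose the joint law of (Car, P1, Goat) is invariant under relabelling of the doors, i.e. for every permutation σ of Fin 3 the triple (σ ∘ Car, σ ∘ P1, σ ∘ Goat) has the same joint distribution as (Car, P1, Goat). Then for all doors i ≠ j with P({P1 = i} ∩ {Goat = j}) > 0, the conditional probability that switching gives the car equals the unconditional one: P({Switch = Car} | {P1 = i} ∩ {Goat = j}) = P({Switch = Car}). -/
open MeasureTheory
open scoped ENNReal

-- auxiliary decidable facts
lemma switchDoor_equivariant : ∀ (σ : Equiv.Perm (Fin 3)) (a b : Fin 3),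
    switchDoor (σ a) (σ b) = σ (switchDoor a b) := by decide

lemma perm_trans : ∀ a b i j : Fin 3, a ≠ b → i ≠ j →
    ∃ σ : Equiv.Perm (Fin 3), σ a = i ∧ σ b = j := by decide

/-- Symmetry reduces the conditional problem to the unconditional one: if the joint
law of `(Car, P1, Goat)` is invariant under every relabelling (permutation) of the
doors, then for all doors `i ≠ j` with `P({P1 = i} ∩ {Goat = j}) > 0` the conditional
probability that switching gives the car equals the unconditional one. -/
theorem monty_hall_symmetry
    {Ω : Type*} [MeasurableSpace Ω] (P : Measure Ω) [IsProbabilityMeasure P]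
    (Car P1 Goat : Ω → Fin 3)
    (hmCar : Measurable Car) (hmP1 : Measurable P1) (hmGoat : Measurable Goat)
    (hGoatCar : ∀ ω, Goat ω ≠ Car ω) (hGoatP1 : ∀ ω, Goat ω ≠ P1 ω)
    (hSym : ∀ σ : Equiv.Perm (Fin 3),
      Measure.map (fun ω => (σ (Car ω), σ (P1 ω), σ (Goat ω))) P =
        Measure.map (fun ω => (Car ω, P1 ω, Goat ω)) P) :
    ∀ i j : Fin 3, i ≠ j → 0 < P ({ω | P1 ω = i} ∩ {ω | Goat ω = j}) →
      P ({ω | switchDoor (P1 ω) (Goat ω) = Car ω} ∩ ({ω | P1 ω = i} ∩ {ω | Goat ω = j})) /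
          P ({ω | P1 ω = i} ∩ {ω | Goat ω = j}) =
        P {ω | switchDoor (P1 ω) (Goat ω) = Car ω} := by
  intro i j hij _hpos
  set SW : Set Ω := {ω | switchDoor (P1 ω) (Goat ω) = Car ω} with hSW
  set A : Fin 3 → Fin 3 → Set Ω := fun a b => {ω | P1 ω = a} ∩ {ω | Goat ω = b} with hA
  set B : Fin 3 → Fin 3 → Set Ω := fun a b => SW ∩ A a b with hB
  have hT : Measurable (fun ω => (Car ω, P1 ω, Goat ω)) :=
    hmCar.prodMk (hmP1.prodMk hmGoat)
  have key : ∀ (σ : Equiv.Perm (Fin 3)) (S : Set (Fin 3 × Fin 3 × Fin 3)),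
      P ((fun ω => (σ (Car ω), σ (P1 ω), σ (Goat ω))) ⁻¹' S) =
      P ((fun ω => (Car ω, P1 ω, Goat ω)) ⁻¹' S) := by
    intro σ S
    have hS : MeasurableSet S := S.toFinite.measurableSet
    have h1 : Measurable (fun ω => (σ (Car ω), σ (P1 ω), σ (Goat ω))) :=
      ((measurable_of_countable σ).comp hmCar).prodMk
        (((measurable_of_countable σ).comp hmP1).prodMk
          ((measurable_of_countable σ).comp hmGoat))
    rw [← Measure.map_apply h1 hS, ← Measure.map_apply hT hS, hSym σ]
  -- measurability of pieces
  have hmA : ∀ a b, MeasurableSet (A a b) := fun a b =>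
    (hmP1 (measurableSet_singleton a)).inter (hmGoat (measurableSet_singleton b))
  have hmSW : MeasurableSet SW := by
    have : SW = (fun ω => (Car ω, P1 ω, Goat ω)) ⁻¹'
        {x : Fin 3 × Fin 3 × Fin 3 | switchDoor x.2.1 x.2.2 = x.1} := rfl
    rw [this]
    exact hT (Set.toFinite _).measurableSet
  have hmB : ∀ a b, MeasurableSet (B a b) := fun a b => hmSW.inter (hmA a b)
  -- equal measures across distinct pairs
  have hAeq : ∀ a b : Fin 3, a ≠ b → P (A a b) = P (A i j) := by
    intro a b hab
    obtain ⟨σ, h1, h2⟩ := perm_trans i j a b hij hab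
    have := key σ {x : Fin 3 × Fin 3 × Fin 3 | x.2.1 = a ∧ x.2.2 = b}
    have hL : (fun ω => (σ (Car ω), σ (P1 ω), σ (Goat ω))) ⁻¹'
        {x : Fin 3 × Fin 3 × Fin 3 | x.2.1 = a ∧ x.2.2 = b} = A i j := by
      ext ω
      simp only [Set.mem_preimage, Set.mem_setOf_eq, hA, Set.mem_inter_iff, ← h1, ← h2,
        σ.apply_eq_iff_eq]
    have hR : (fun ω => (Car ω, P1 ω, Goat ω)) ⁻¹'
        {x : Fin 3 × Fin 3 × Fin 3 | x.2.1 = a ∧ x.2.2 = b} = A a b := by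
      ext ω
      simp [hA]
    rw [hL, hR] at this
    exact this.symm
  have hBeq : ∀ a b : Fin 3, a ≠ b → P (B a b) = P (B i j) := by
    intro a b hab
    obtain ⟨σ, h1, h2⟩ := perm_trans i j a b hij hab
    have := key σ {x : Fin 3 × Fin 3 × Fin 3 | switchDoor x.2.1 x.2.2 = x.1 ∧ x.2.1 = a ∧ x.2.2 = b}
    have hL : (fun ω => (σ (Car ω), σ (P1 ω), σ (Goat ω))) ⁻¹'
        {x : Fin 3 × Fin 3 × Fin 3 | switchDoor x.2.1 x.2.2 = x.1 ∧ x.2.1 = a ∧ x.2.2 = b}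
        = B i j := by
      ext ω
      simp only [Set.mem_preimage, Set.mem_setOf_eq, hB, hA, hSW, Set.mem_inter_iff,
        switchDoor_equivariant, σ.apply_eq_iff_eq, ← h1, ← h2]
    have hR : (fun ω => (Car ω, P1 ω, Goat ω)) ⁻¹'
        {x : Fin 3 × Fin 3 × Fin 3 | switchDoor x.2.1 x.2.2 = x.1 ∧ x.2.1 = a ∧ x.2.2 = b}
        = B a b := by
      ext ω
      simp [hB, hA, hSW]
    rw [hL, hR] at this
    exact this.symm
  -- diagonal is null
  have hAdiag : ∀ a : Fin 3, P (A a a) = 0 := by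
    intro a
    have : A a a = ∅ := by
      ext ω
      simp only [hA, Set.mem_inter_iff, Set.mem_setOf_eq, Set.mem_empty_iff_false, iff_false]
      rintro ⟨h1, h2⟩
      exact hGoatP1 ω (h2.trans h1.symm)
    rw [this, measure_empty]
  have hBdiag : ∀ a : Fin 3, P (B a a) = 0 :=
    fun a => measure_mono_null Set.inter_subset_right (by rw [← hAdiag a])
  -- disjointness
  have hdisj : Pairwise (Function.onFun Disjoint fun x : Fin 3 × Fin 3 => A x.1 x.2) := by
    intro x y hxy
    rw [Function.onFun, Set.disjoint_left]
    rintro ω ⟨hp, hg⟩ ⟨hp', hg'⟩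
    exact hxy (Prod.ext (hp.symm.trans hp') (hg.symm.trans hg'))
  have hdisjB : Pairwise (Function.onFun Disjoint fun x : Fin 3 × Fin 3 => B x.1 x.2) :=
    fun x y hxy => ((hdisj hxy).mono inf_le_right inf_le_right)
  -- sums
  have hsumA : ∑ x : Fin 3 × Fin 3, P (A x.1 x.2) = 1 := by
    have hu : (⋃ x : Fin 3 × Fin 3, A x.1 x.2) = Set.univ := by
      ext ω
      simp only [Set.mem_iUnion, Set.mem_univ, iff_true]
      exact ⟨(P1 ω, Goat ω), rfl, rfl⟩
    have := measure_iUnion (μ := P) hdisj (fun x => hmA x.1 x.2)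
    rw [hu, measure_univ, tsum_fintype] at this
    exact this.symm
  have hsumB : ∑ x : Fin 3 × Fin 3, P (B x.1 x.2) = P SW := by
    have hu : (⋃ x : Fin 3 × Fin 3, B x.1 x.2) = SW := by
      ext ω
      simp only [hB, Set.mem_iUnion, Set.mem_inter_iff]
      constructor
      · rintro ⟨x, h, _⟩; exact h
      · intro h; exact ⟨(P1 ω, Goat ω), h, rfl, rfl⟩
    have := measure_iUnion (μ := P) hdisjB (fun x => hmB x.1 x.2)
    rw [hu, tsum_fintype] at this
    exact this.symm
  have h6A : 6 * P (A i j) = 1 := by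
    rw [← hsumA, Fintype.sum_prod_type]
    simp only [Fin.sum_univ_three]
    rw [hAdiag 0, hAdiag 1, hAdiag 2, hAeq 0 1 (by decide), hAeq 0 2 (by decide),
      hAeq 1 0 (by decide), hAeq 1 2 (by decide), hAeq 2 0 (by decide), hAeq 2 1 (by decide)]
    ring
  have h6B : P SW = 6 * P (B i j) := by
    rw [← hsumB, Fintype.sum_prod_type]
    simp only [Fin.sum_univ_three]
    rw [hBdiag 0, hBdiag 1, hBdiag 2, hBeq 0 1 (by decide), hBeq 0 2 (by decide),
      hBeq 1 0 (by decide), hBeq 1 2 (by decide), hBeq 2 0 (by decide), hBeq 2 1 (by decide)]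
    ring
  show P (B i j) / P (A i j) = P SW
  calc P (B i j) / P (A i j)
      = (6 * P (B i j)) / (6 * P (A i j)) :=
        (ENNReal.mul_div_mul_left _ _ (by norm_num) (by norm_num)).symm
    _ = (6 * P (B i j)) / 1 := by rw [h6A]
    _ = 6 * P (B i j) := by simp
    _ = P SW := h6B.symm
end

section
/- Let μ* : PMF PlayerStrat be the player mixed strategy that chooses the initial door d uniformly at random among the three doors and always switches (s is constantly true). Then for every host mixed strategy ν : PMF HostStrat, the player's win probability is exactly W(μ*, ν) = 2/3. -/
open scoped ENNReal

/-- Doors of the Monty Hall game. -/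
abbrev Door := Fin 3

/-- A host pure strategy: a pair `(c, g)` where `c` is the door hiding the car and
`g ≠ c` is the door the host opens if the player initially picks door `c`. -/
abbrev HostStrat := {p : Door × Door // p.2 ≠ p.1}

/-- A player pure strategy: an initially chosen door `d` together with a function
`s` telling, for each door `j` the host might open, whether the player switches. -/
abbrev PlayerStrat := Door × (Door → Bool)

/-- For two distinct doors `a b : Fin 3`, `thirdDoor a b = -(a + b)` is the unique
door distinct from both `a` and `b` (since `0 + 1 + 2 = 0` in `Fin 3`). -/
def thirdDoor (a b : Door) : Door := -(a + b)

/-- The door opened by the host: `g` if the player initially picked the car door `c`,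
otherwise the unique door distinct from both the player's door `d` and `c`. -/
def openedDoor (d : Door) (h : HostStrat) : Door :=
  if d = h.val.1 then h.val.2 else thirdDoor d h.val.1

/-- The player's final door: the unique door distinct from the initially chosen door
and the opened door if the player switches, and the initially chosen door otherwise. -/
def finalDoor (p : PlayerStrat) (h : HostStrat) : Door :=
  if p.2 (openedDoor p.1 h) then thirdDoor p.1 (openedDoor p.1 h) else p.1

/-- The player wins iff his final door hides the car. -/
def playerWins (p : PlayerStrat) (h : HostStrat) : Prop := finalDoor p h = h.val.1

instance (p : PlayerStrat) (h : HostStrat) : Decidable (playerWins p h) :=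
  inferInstanceAs (Decidable (finalDoor p h = h.val.1))

/-- The win probability of player mixed strategy `μ` against host mixed strategy `ν`:
the expectation, under the product of `μ` and `ν`, of the indicator that the player
wins. -/
noncomputable def winProb (μ : PMF PlayerStrat) (ν : PMF HostStrat) : ℝ≥0∞ :=
  ∑' p : PlayerStrat, ∑' h : HostStrat,
    μ p * ν h * (if playerWins p h then 1 else 0)

/-!
Always switching wins exactly when the initial pick misses the car: the host's door is then
forced, and switching lands on the car. A uniform initial pick misses with probability `2/3`
wherever the car is, so against every pure host strategy, and hence against every mixture of
them, the win probability is `2/3`.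
-/

theorem winProb_eq_of_forall_host {μ : PMF PlayerStrat} {w : ℝ≥0∞}
    (hw : ∀ h : HostStrat, ∑' p, μ p * (if playerWins p h then 1 else 0) = w)
    (ν : PMF HostStrat) : winProb μ ν = w := by
  calc winProb μ ν
      = ∑' h, ν h * ∑' p, μ p * (if playerWins p h then 1 else 0) := by
        rw [winProb, ENNReal.tsum_comm]
        congr 1 with h
        rw [← ENNReal.tsum_mul_left]
        congr 1 with p
        ring
    _ = w := by simp only [hw, ENNReal.tsum_mul_right, ν.tsum_coe, one_mul]

theorem playerWins_alwaysSwitch_iff (d : Door) (h : HostStrat) :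
    playerWins (d, fun _ => true) h ↔ d ≠ h.val.1 := by
  obtain ⟨⟨c, g⟩, hg⟩ := h
  revert d c g
  decide

theorem sum_ite_ne_door (c : Door) :
    ∑ d : Door, (if d ≠ c then (1 : ℝ≥0∞) else 0) = 2 := by
  rw [Finset.sum_boole, Finset.filter_ne', Finset.card_erase_of_mem (Finset.mem_univ c)]
  norm_num

/-- If the player chooses his initial door uniformly at random and always switches,
then against every host mixed strategy his win probability is exactly `2/3`. -/
theorem monty_hall_player_minimax
    (μ : PMF PlayerStrat)
    (hμ : ∀ x : PlayerStrat,
      μ x = if x.2 = (fun _ => true) then 1 / 3 else 0)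
    (ν : PMF HostStrat) :
    winProb μ ν = 2 / 3 := by
  refine winProb_eq_of_forall_host (fun h => ?_) ν
  calc ∑' p, μ p * (if playerWins p h then 1 else 0)
      = ∑' d : Door, 1 / 3 * (if d ≠ h.val.1 then 1 else 0) := by
        simp only [ENNReal.tsum_prod', hμ, ite_mul, zero_mul, tsum_ite_eq,
          playerWins_alwaysSwitch_iff]
    _ = 2 / 3 := by
        rw [ENNReal.tsum_mul_left, tsum_fintype, sum_ite_ne_door, mul_comm, ← div_eq_mul_one_div]
end

section
/- Let ν* : PMF HostStrat be the host mixed strategy that hides the car uniformly at random and, when it has a choice, opens a door uniformly at random; that is, ν* assigns probability 1/6 to each of the six host pure strategies (c, g) with g ≠ c. Then for every player mixed strategy μ : PMF PlayerStrat, the player's win probability satisfies W(μ, ν*) ≤ 2/3. -/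
open scoped ENNReal

lemma card_wins_le (p : PlayerStrat) :
    (Finset.univ.filter (fun h : HostStrat => playerWins p h)).card ≤ 4 := by
  revert p; decide

/-- If the host hides the car uniformly at random and opens a door uniformly at
random when he has a choice — i.e. his mixed strategy assigns probability `1/6` to
each of the six host pure strategies — then no player mixed strategy achieves a win
probability greater than `2/3`. -/
theorem monty_hall_host_minimax
    (ν : PMF HostStrat) (hν : ∀ h : HostStrat, ν h = 1 / 6)
    (μ : PMF PlayerStrat) :
    winProb μ ν ≤ 2 / 3 := by
  have hkey : ∀ p : PlayerStrat,
      (∑' h : HostStrat, ν h * (if playerWins p h then (1:ℝ≥0∞) else 0)) ≤ 2/3 := by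
    intro p
    rw [tsum_fintype]
    simp_rw [hν, ← Finset.mul_sum]
    have hc : (∑ h : HostStrat, (if playerWins p h then (1:ℝ≥0∞) else 0))
        = ((Finset.univ.filter (fun h : HostStrat => playerWins p h)).card : ℝ≥0∞) := by
      simp [Finset.sum_boole]
    rw [hc]
    calc (1/6 : ℝ≥0∞) * ((Finset.univ.filter (fun h : HostStrat => playerWins p h)).card : ℝ≥0∞)
        ≤ (1/6 : ℝ≥0∞) * 4 := by
          gcongr
          exact_mod_cast card_wins_le p
      _ = 2/3 := by
          rw [one_div, ← ENNReal.div_eq_inv_mul, ENNReal.div_eq_div_iff] <;> norm_num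
  calc winProb μ ν
      = ∑' p : PlayerStrat, μ p * ∑' h : HostStrat, ν h * (if playerWins p h then (1:ℝ≥0∞) else 0) := by
        unfold winProb
        simp_rw [mul_assoc, ENNReal.tsum_mul_left]
    _ ≤ ∑' p : PlayerStrat, μ p * (2/3) := by
        exact ENNReal.tsum_le_tsum fun p => mul_le_mul_right (hkey p) _
    _ = 2/3 := by rw [ENNReal.tsum_mul_right, μ.tsum_coe, one_mul]
end

section
/- Minimax solution of the Monty Hall game: let μ* be the player mixed strategy choosing the initial door uniformly at random and always switching, and let ν* be the host mixed strategy assigning probability 1/6 to each of the six host pure strategies (c, g) with g ≠ c. Then (μ*, ν*) is a saddle point with value 2/3: W(μ*, ν*) = 2/3, W(μ, ν*) ≤ 2/3 for every player mixed strategy μ, and W(μ*, ν) ≥ 2/3 for every host mixed strategy ν. Consequently the game has value 2/3: the supremum over player mixed strategies μ of the infimum over host mixed strategies ν of W(μ, ν) equals 2/3, and the infimum over ν of the supremum over μ of W(μ, ν) also equals 2/3. -/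
open scoped ENNReal

lemma monty_host_card : ∀ p : PlayerStrat,
    (Finset.univ.filter (fun h : HostStrat => playerWins p h)).card ≤ 4 := by decide

lemma monty_player_card : ∀ h : HostStrat,
    (Finset.univ.filter (fun d : Door => playerWins (d, fun _ => true) h)).card = 2 := by
  decide

private lemma monty_aux1 : (1/6 : ℝ≥0∞) * 4 = 2/3 := by
  rw [one_div, ← ENNReal.div_eq_inv_mul, ENNReal.div_eq_div_iff] <;> norm_num

private lemma monty_aux2 : (1/3 : ℝ≥0∞) * 2 = 2/3 := by
  rw [one_div, ← ENNReal.div_eq_inv_mul, ENNReal.div_eq_div_iff] <;> norm_num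

/-- Minimax solution of the Monty Hall game: the player strategy `μ*` choosing the
initial door uniformly at random and always switching, together with the host
strategy `ν*` assigning probability `1/6` to each of the six host pure strategies,
form a saddle point with value `2/3`; consequently the game has value `2/3`. -/
theorem monty_hall_minimax_solution
    (μstar : PMF PlayerStrat)
    (hμstar : ∀ x : PlayerStrat,
      μstar x = if x.2 = (fun _ => true) then 1 / 3 else 0)
    (νstar : PMF HostStrat) (hνstar : ∀ h : HostStrat, νstar h = 1 / 6) :
    winProb μstar νstar = 2 / 3 ∧
      (∀ μ : PMF PlayerStrat, winProb μ νstar ≤ 2 / 3) ∧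
      (∀ ν : PMF HostStrat, 2 / 3 ≤ winProb μstar ν) ∧
      (⨆ μ : PMF PlayerStrat, ⨅ ν : PMF HostStrat, winProb μ ν) = 2 / 3 ∧
      (⨅ ν : PMF HostStrat, ⨆ μ : PMF PlayerStrat, winProb μ ν) = 2 / 3 := by
  have key1 : ∀ ν : PMF HostStrat, winProb μstar ν = 2/3 := by
    intro ν
    have hswap : winProb μstar ν = ∑' h : HostStrat, ∑' p : PlayerStrat,
        μstar p * ν h * (if playerWins p h then 1 else 0) := ENNReal.tsum_comm
    rw [hswap]
    have hinner : ∀ h : HostStrat, (∑' p : PlayerStrat,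
        μstar p * ν h * (if playerWins p h then 1 else 0)) = ν h * (2/3) := by
      intro h
      rw [tsum_fintype]
      have h1 : ∀ p : PlayerStrat, μstar p * ν h * (if playerWins p h then 1 else 0)
          = ν h * (μstar p * (if playerWins p h then 1 else 0)) := fun p => by ring
      simp_rw [h1, ← Finset.mul_sum]
      congr 1
      rw [Fintype.sum_prod_type]
      have h2 : ∀ d : Door, ∀ s : Door → Bool,
          μstar (d, s) * (if playerWins (d, s) h then (1:ℝ≥0∞) else 0)
          = if s = (fun _ => true) then
              ((1:ℝ≥0∞)/3) * (if playerWins (d, fun _ => true) h then 1 else 0)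
            else 0 := by
        intro d s
        rw [hμstar]
        by_cases hs : s = (fun _ => true)
        · subst hs; simp
        · simp [hs]
      simp_rw [h2]
      rw [Finset.sum_congr rfl (fun d _ =>
        Finset.sum_ite_eq' Finset.univ (fun _ => true)
          (fun _ => ((1:ℝ≥0∞)/3) * (if playerWins (d, fun _ => true) h then 1 else 0)))]
      simp_rw [Finset.mem_univ, if_true, ← Finset.mul_sum, Finset.sum_boole,
        monty_player_card h]
      exact monty_aux2.trans (by norm_num)
    simp_rw [hinner]
    rw [ENNReal.tsum_mul_right, ν.tsum_coe, one_mul]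
  have key2 : ∀ μ : PMF PlayerStrat, winProb μ νstar ≤ 2/3 := by
    intro μ
    have hbound : ∀ p : PlayerStrat, (∑' h : HostStrat,
        μ p * νstar h * (if playerWins p h then 1 else 0)) ≤ μ p * (2/3) := by
      intro p
      rw [tsum_fintype]
      have h1 : ∀ h : HostStrat, μ p * νstar h * (if playerWins p h then (1:ℝ≥0∞) else 0)
          = μ p * ((1/6) * (if playerWins p h then 1 else 0)) := fun h => by
        rw [hνstar]; ring
      simp_rw [h1]
      rw [← Finset.mul_sum, ← Finset.mul_sum, Finset.sum_boole]
      refine mul_le_mul_right ?_ _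
      calc (1/6 : ℝ≥0∞) * ((Finset.univ.filter fun h : HostStrat => playerWins p h).card : ℕ)
          ≤ (1/6) * 4 := by
            refine mul_le_mul_right ?_ _
            exact_mod_cast monty_host_card p
        _ = 2/3 := monty_aux1
    calc winProb μ νstar ≤ ∑' p : PlayerStrat, μ p * (2/3) :=
          ENNReal.tsum_le_tsum hbound
      _ = 2/3 := by rw [ENNReal.tsum_mul_right, μ.tsum_coe, one_mul]
  refine ⟨key1 νstar, key2, fun ν => (key1 ν).ge, ?_, ?_⟩
  · apply le_antisymm
    · exact iSup_le fun μ => (iInf_le _ νstar).trans (key2 μ)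
    · exact le_iSup_of_le μstar (le_iInf fun ν => (key1 ν).ge)
  · apply le_antisymm
    · exact (iInf_le _ νstar).trans (iSup_le key2)
    · exact le_iInf fun ν => le_iSup_of_le μstar (key1 ν).ge
end
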